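/- arXiv:2510.15473 — 5 statements merged into one kernel-verified Lean document; each statement's English description precedes it below -/
import Mathlib

section
/- Let M be an n×n doubly stochastic matrix and suppose that for every row index u, ‖M_{u,·} − (1/n)·𝟙‖₂² ≤ (ε/(2Kn))². Then for any x ∈ ℝ^n with discrepancy at most K, the vector xM has all entries within ε of the average x̄ = (∑_i x_i)/n; in particular disc(xM) ≤ 2ε. -/
/-- If every row of a doubly stochastic matrix `M` satisfies
`‖M_{u,·} − (1/n)𝟙‖₂² ≤ (ε/(2Kn))²`, then for any `x` with discrepancy at most `K`,
every entry of `x·M` is within `ε` of the average `x̄`, and `disc(x·M) ≤ 2ε`. -/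
theorem l2_close_smoothing (n : ℕ) (hn : 0 < n)
    (M : Matrix (Fin n) (Fin n) ℝ)
    (hnonneg : ∀ u v, 0 ≤ M u v)
    (hrow : ∀ u, ∑ v, M u v = 1)
    (hcol : ∀ v, ∑ u, M u v = 1)
    (K ε : ℝ) (hK : 0 < K) (hε : 0 < ε)
    (hclose : ∀ u, ∑ v, (M u v - 1 / n) ^ 2 ≤ (ε / (2 * K * n)) ^ 2)
    (x : Fin n → ℝ)
    (hdisc : ∀ i j, x i - x j ≤ K) :
    (∀ v, |(∑ u, x u * M u v) - (∑ i, x i) / n| ≤ ε) ∧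
    (∀ v w, (∑ u, x u * M u v) - (∑ u, x u * M u w) ≤ 2 * ε) := by
  have hnR : (0:ℝ) < n := by exact_mod_cast hn
  have hb : (0:ℝ) ≤ ε / (2 * K * n) := by positivity
  set j0 : Fin n := ⟨0, hn⟩
  set c := x j0 with hc
  have hentry : ∀ u v, |M u v - 1 / n| ≤ ε / (2 * K * n) := by
    intro u v
    have h1 : (M u v - 1 / n) ^ 2 ≤ (ε / (2 * K * n)) ^ 2 :=
      le_trans (Finset.single_le_sum (f := fun w => (M u w - 1 / n) ^ 2) (fun i _ => sq_nonneg _) (Finset.mem_univ v)) (hclose u)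
    have h2 := abs_le_of_sq_le_sq' h1 hb
    exact abs_le.mpr h2
  have hx : ∀ u, |x u - c| ≤ K :=
    fun u => abs_le.mpr ⟨by linarith [hdisc j0 u], hdisc u j0⟩
  have hmain : ∀ v, |(∑ u, x u * M u v) - (∑ i, x i) / n| ≤ ε / 2 := by
    intro v
    have hrw : (∑ u, x u * M u v) - (∑ i, x i) / n
        = ∑ u, (x u - c) * (M u v - 1 / n) := by
      have e1 : ∑ u, (x u - c) * (M u v - 1 / n)
          = (∑ u, x u * M u v) - (∑ u, x u) * (1 / n)
            - c * (∑ u, M u v) + c * (n * (1 / n)) := by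
        simp only [sub_mul, mul_sub, Finset.sum_sub_distrib, ← Finset.sum_mul,
          ← Finset.mul_sum, Finset.sum_const, Finset.card_univ, Fintype.card_fin,
          nsmul_eq_mul]
        ring
      rw [e1, hcol v, mul_one_div_cancel (ne_of_gt hnR)]
      ring
    rw [hrw]
    calc |∑ u, (x u - c) * (M u v - 1 / n)|
        ≤ ∑ u, |(x u - c) * (M u v - 1 / n)| := Finset.abs_sum_le_sum_abs _ _
      _ ≤ ∑ _u : Fin n, K * (ε / (2 * K * n)) := by
          refine Finset.sum_le_sum fun u _ => ?_
          rw [abs_mul]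
          exact mul_le_mul (hx u) (hentry u v) (abs_nonneg _) (le_of_lt hK)
      _ = ε / 2 := by
          rw [Finset.sum_const, Finset.card_univ, Fintype.card_fin, nsmul_eq_mul]
          field_simp
  refine ⟨fun v => le_trans (hmain v) (by linarith), fun v w => ?_⟩
  have h1 := abs_le.mp (hmain v)
  have h2 := abs_le.mp (hmain w)
  linarith [h1.2, h2.1]
end

section
/- Define the potential Ψ(P) = ∑_{w} (∑_{k} a_k P_{w,k} − 1/n)² for a doubly stochastic matrix P and a stochastic vector a. Let M be a matching matrix containing the single matched pair [u:v] (M_{u,v}=M_{v,u}=M_{u,u}=M_{v,v}=1/2, identity elsewhere). Then Ψ(P) − Ψ(MP) = (1/2)·(∑_k a_k(P_{u,k} − P_{v,k}))². In particular Ψ(MP) ≤ Ψ(P). -/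
/-- Potential drop for a single matched pair: with `Ψ(P) = ∑_w (∑_k a_k P_{w,k} − 1/n)²`
and `M` the matching matrix of the single matched pair `[u:v]`,
`Ψ(P) − Ψ(M·P) = (1/2)·(∑_k a_k (P_{u,k} − P_{v,k}))²`; in particular `Ψ(M·P) ≤ Ψ(P)`. -/
theorem potential_drop_single_edge (n : ℕ) (hn : 2 ≤ n)
    (u v : Fin n) (huv : u ≠ v)
    (a : Fin n → ℝ) (ha0 : ∀ k, 0 ≤ a k) (ha1 : ∑ k, a k = 1)
    (P : Matrix (Fin n) (Fin n) ℝ)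
    (hPnonneg : ∀ i j, 0 ≤ P i j)
    (hProw : ∀ i, ∑ j, P i j = 1)
    (hPcol : ∀ j, ∑ i, P i j = 1)
    (M : Matrix (Fin n) (Fin n) ℝ)
    (hM : ∀ i j, M i j =
      if (i = u ∧ j = u) ∨ (i = u ∧ j = v) ∨ (i = v ∧ j = u) ∨ (i = v ∧ j = v)
      then (1 / 2 : ℝ)
      else if i = j then 1 else 0) :
    (∑ w, (∑ k, a k * P w k - 1 / n) ^ 2)
        - (∑ w, (∑ k, a k * (M * P) w k - 1 / n) ^ 2)
      = (1 / 2) * (∑ k, a k * (P u k - P v k)) ^ 2 ∧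
    (∑ w, (∑ k, a k * (M * P) w k - 1 / n) ^ 2)
      ≤ ∑ w, (∑ k, a k * P w k - 1 / n) ^ 2 := by
  have hMP : ∀ w k, (M * P) w k =
      if w = u ∨ w = v then (P u k + P v k) / 2 else P w k := by
    intro w k
    rw [Matrix.mul_apply]
    by_cases hw : w = u ∨ w = v
    · simp only [hw, if_true]
      have hsub : ({u, v} : Finset (Fin n)) ⊆ Finset.univ := Finset.subset_univ _
      rw [← Finset.sum_subset hsub (by
        intro j _ hj
        simp only [Finset.mem_insert, Finset.mem_singleton, not_or] at hj
        rw [hM]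
        have hwj : w ≠ j := by rcases hw with rfl | rfl <;> [exact Ne.symm hj.1; exact Ne.symm hj.2]
        simp [hj.1, hj.2, hwj])]
      rw [Finset.sum_pair huv, hM, hM]
      rcases hw with rfl | rfl <;> simp <;> ring
    · push_neg at hw
      rw [Finset.sum_eq_single w (fun j _ hj => by
          rw [hM]
          have : ¬ (w = j) := fun h => hj h.symm
          simp [hw.1, hw.2, this]) (by simp)]
      rw [hM]
      simp [hw.1, hw.2]
  set su := ∑ k, a k * P u k with hsu
  set sv := ∑ k, a k * P v k with hsv
  have hfu : (∑ k, a k * (M * P) u k) = (su + sv) / 2 := by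
    simp only [hMP]
    simp only [eq_self_iff_true, true_or, if_true]
    rw [hsu, hsv, ← Finset.sum_add_distrib, Finset.sum_div]
    apply Finset.sum_congr rfl; intro k _; ring
  have hfv : (∑ k, a k * (M * P) v k) = (su + sv) / 2 := by
    simp only [hMP]
    simp only [eq_self_iff_true, or_true, if_true]
    rw [hsu, hsv, ← Finset.sum_add_distrib, Finset.sum_div]
    apply Finset.sum_congr rfl; intro k _; ring
  have hfw : ∀ w, w ≠ u → w ≠ v → (∑ k, a k * (M * P) w k) = ∑ k, a k * P w k := by
    intro w h1 h2
    apply Finset.sum_congr rfl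
    intro k _
    rw [hMP]
    simp [h1, h2]
  have hdiff : ∑ k, a k * (P u k - P v k) = su - sv := by
    rw [hsu, hsv, ← Finset.sum_sub_distrib]
    apply Finset.sum_congr rfl; intro k _; ring
  have hsplit : ∀ (f : Fin n → ℝ), ∑ w, f w =
      f u + f v + ∑ w ∈ Finset.univ \ {u, v}, f w := by
    intro f
    rw [← Finset.sum_pair huv, ← Finset.sum_sdiff (Finset.subset_univ ({u, v} : Finset (Fin n)))]
    ring
  have heq : (∑ w, (∑ k, a k * P w k - 1 / n) ^ 2)
        - (∑ w, (∑ k, a k * (M * P) w k - 1 / n) ^ 2)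
      = (1 / 2) * (∑ k, a k * (P u k - P v k)) ^ 2 := by
    rw [hsplit (fun w => (∑ k, a k * P w k - 1 / n) ^ 2),
        hsplit (fun w => (∑ k, a k * (M * P) w k - 1 / n) ^ 2)]
    have hrest : ∑ w ∈ Finset.univ \ {u, v}, (∑ k, a k * (M * P) w k - 1 / n) ^ 2
        = ∑ w ∈ Finset.univ \ {u, v}, (∑ k, a k * P w k - 1 / n) ^ 2 := by
      apply Finset.sum_congr rfl
      intro w hw
      simp only [Finset.mem_sdiff, Finset.mem_insert, Finset.mem_singleton, not_or] at hw
      rw [hfw w hw.2.1 hw.2.2]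
    simp only [hfu, hfv, hrest, hdiff, ← hsu, ← hsv]
    ring
  exact ⟨heq, by nlinarith [sq_nonneg (∑ k, a k * (P u k - P v k))]⟩
end

section
/- Let (M^{(s)})_{s=1}^{t} be matching matrices and a a stochastic vector. For 1 ≤ s ≤ t let M^{[s+1,t]} denote the product M^{(s+1)}···M^{(t)} (identity if s=t). Then ∑_{s=1}^{t} ∑_{[u:v]∈M^{(s)}} (∑_{k} a_k (M^{[s+1,t]}_{u,k} − M^{[s+1,t]}_{v,k}))² ≤ 2‖a‖₂² − 2/n. -/
open Finset

section aux
variable {n : ℕ}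

lemma pair_sum (σ : Fin n → Fin n) (hinv : ∀ u, σ (σ u) = u) (g : Fin n → ℝ) :
    ∑ u, g u = (∑ u ∈ univ.filter (fun u => σ u = u), g u)
      + ∑ u ∈ univ.filter (fun u => u < σ u), (g u + g (σ u)) := by
  classical
  have h1 : ∑ u, g u
      = (∑ u ∈ univ.filter (fun u => σ u = u), g u)
        + ∑ u ∈ univ.filter (fun u => ¬ σ u = u), g u :=
    (Finset.sum_filter_add_sum_filter_not _ _ _).symm
  have hsplit : univ.filter (fun u : Fin n => ¬ σ u = u)
      = (univ.filter (fun u => u < σ u)) ∪ (univ.filter (fun u => σ u < u)) := by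
    ext u
    simp only [mem_filter, mem_univ, true_and, mem_union]
    constructor
    · intro h; exact lt_or_gt_of_ne (Ne.symm h)
    · rintro (h | h)
      · exact fun he => absurd he (ne_of_lt h).symm
      · exact fun he => absurd he (ne_of_lt h)
  have hdisj : Disjoint (univ.filter (fun u : Fin n => u < σ u))
      (univ.filter (fun u => σ u < u)) := by
    rw [Finset.disjoint_left]
    intro u hu hv
    simp only [mem_filter, mem_univ, true_and] at hu hv
    exact absurd hv (asymm hu)
  have h2 : ∑ u ∈ univ.filter (fun u => ¬ σ u = u), g u
      = (∑ u ∈ univ.filter (fun u => u < σ u), g u)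
        + ∑ u ∈ univ.filter (fun u => σ u < u), g u := by
    rw [hsplit, Finset.sum_union hdisj]
  have h3 : ∑ u ∈ univ.filter (fun u => σ u < u), g u
      = ∑ u ∈ univ.filter (fun u => u < σ u), g (σ u) := by
    refine Finset.sum_nbij' (fun u => σ u) (fun u => σ u) ?_ ?_ ?_ ?_ ?_
    · intro u hu
      simp only [mem_filter, mem_univ, true_and] at hu ⊢
      rw [hinv]; exact hu
    · intro u hu
      simp only [mem_filter, mem_univ, true_and] at hu ⊢
      rw [hinv]; exact hu
    · intro u _; exact hinv u
    · intro u _; exact hinv u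
    · intro u _; rw [hinv]
  rw [h1, h2, h3, Finset.sum_add_distrib]

lemma matvec (σ : Fin n → Fin n) (M : Matrix (Fin n) (Fin n) ℝ)
    (hM : ∀ u v, M u v =
      if σ u = u then (if v = u then (1 : ℝ) else 0)
      else (if v = u ∨ v = σ u then 1 / 2 else 0))
    (y : Fin n → ℝ) (u : Fin n) :
    ∑ j, M u j * y j = if σ u = u then y u else (y u + y (σ u)) / 2 := by
  classical
  by_cases h : σ u = u
  · simp only [h, if_true]
    rw [Finset.sum_congr rfl (fun j _ => by rw [hM u j, if_pos h])]
    simp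
  · simp only [h, if_false]
    have key : ∀ j, M u j * y j
        = (if j = u then y j / 2 else 0) + (if j = σ u then y j / 2 else 0) := by
      intro j
      rw [hM u j, if_neg h]
      by_cases h1 : j = u
      · subst h1
        rw [if_pos (Or.inl rfl), if_pos rfl, if_neg (fun he => h he.symm)]
        ring
      · by_cases h2 : j = σ u
        · subst h2
          rw [if_pos (Or.inr rfl), if_neg h1, if_pos rfl]
          ring
        · rw [if_neg (by tauto), if_neg h1, if_neg h2]
          ring
    rw [Finset.sum_congr rfl (fun j _ => key j), Finset.sum_add_distrib,
      Finset.sum_ite_eq' univ u (fun j => y j / 2),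
      Finset.sum_ite_eq' univ (σ u) (fun j => y j / 2)]
    simp; ring

lemma step_identity (σ : Fin n → Fin n) (hinv : ∀ u, σ (σ u) = u)
    (M : Matrix (Fin n) (Fin n) ℝ)
    (hM : ∀ u v, M u v =
      if σ u = u then (if v = u then (1 : ℝ) else 0)
      else (if v = u ∨ v = σ u then 1 / 2 else 0))
    (y : Fin n → ℝ) :
    ∑ u ∈ univ.filter (fun u => u < σ u), (y u - y (σ u)) ^ 2
      = 2 * ((∑ u, y u ^ 2) - ∑ u, (∑ j, M u j * y j) ^ 2) := by
  classical
  set z : Fin n → ℝ := fun u => ∑ j, M u j * y j with hz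
  have hzval : ∀ u, z u = if σ u = u then y u else (y u + y (σ u)) / 2 :=
    fun u => matvec σ M hM y u
  have h1 := pair_sum σ hinv (fun u => y u ^ 2)
  have h2 := pair_sum σ hinv (fun u => z u ^ 2)
  have hA : ∑ u ∈ univ.filter (fun u => σ u = u), z u ^ 2
      = ∑ u ∈ univ.filter (fun u => σ u = u), y u ^ 2 := by
    refine Finset.sum_congr rfl (fun u hu => ?_)
    simp only [mem_filter, mem_univ, true_and] at hu
    rw [hzval u, if_pos hu]
  have hB : ∀ u ∈ univ.filter (fun u : Fin n => u < σ u),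
      (y u - y (σ u)) ^ 2 = 2 * ((y u ^ 2 + y (σ u) ^ 2) - (z u ^ 2 + z (σ u) ^ 2)) := by
    intro u hu
    simp only [mem_filter, mem_univ, true_and] at hu
    have hne : ¬ σ u = u := (ne_of_lt hu).symm
    have hne2 : ¬ σ (σ u) = σ u := by rw [hinv]; exact ne_of_lt hu
    rw [hzval u, if_neg hne, hzval (σ u), if_neg hne2, hinv]
    ring
  calc ∑ u ∈ univ.filter (fun u => u < σ u), (y u - y (σ u)) ^ 2
      = ∑ u ∈ univ.filter (fun u => u < σ u),
          (2 * ((y u ^ 2 + y (σ u) ^ 2) - (z u ^ 2 + z (σ u) ^ 2))) :=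
        Finset.sum_congr rfl hB
    _ = 2 * ((∑ u ∈ univ.filter (fun u => u < σ u), (y u ^ 2 + y (σ u) ^ 2))
          - ∑ u ∈ univ.filter (fun u => u < σ u), (z u ^ 2 + z (σ u) ^ 2)) := by
        rw [← Finset.mul_sum, Finset.sum_sub_distrib]
    _ = 2 * ((∑ u, y u ^ 2) - ∑ u, z u ^ 2) := by
        rw [h1, h2, hA]; ring

lemma sum_preserved (σ : Fin n → Fin n) (hinv : ∀ u, σ (σ u) = u)
    (M : Matrix (Fin n) (Fin n) ℝ)
    (hM : ∀ u v, M u v =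
      if σ u = u then (if v = u then (1 : ℝ) else 0)
      else (if v = u ∨ v = σ u then 1 / 2 else 0))
    (y : Fin n → ℝ) :
    ∑ u, (∑ j, M u j * y j) = ∑ u, y u := by
  classical
  set z : Fin n → ℝ := fun u => ∑ j, M u j * y j with hz
  have hzval : ∀ u, z u = if σ u = u then y u else (y u + y (σ u)) / 2 :=
    fun u => matvec σ M hM y u
  rw [pair_sum σ hinv z, pair_sum σ hinv y]
  congr 1
  · refine Finset.sum_congr rfl (fun u hu => ?_)
    simp only [mem_filter, mem_univ, true_and] at hu
    rw [hzval u, if_pos hu]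
  · refine Finset.sum_congr rfl (fun u hu => ?_)
    simp only [mem_filter, mem_univ, true_and] at hu
    have hne : ¬ σ u = u := (ne_of_lt hu).symm
    have hne2 : ¬ σ (σ u) = σ u := by rw [hinv]; exact ne_of_lt hu
    rw [hzval u, if_neg hne, hzval (σ u), if_neg hne2, hinv]
    ring

end aux

/-- For matching matrices `M^{(1)},…,M^{(t)}` (given by involutions `σ s`) and a
stochastic vector `a`, with `Q s = M^{(s+1)}···M^{(t)}` (so `Q t = 1`),
`∑_{s=1}^{t} ∑_{[u:v] ∈ M^{(s)}} (∑_k a_k (Q s)_{u,k} − (Q s)_{v,k})² ≤ 2‖a‖₂² − 2/n`,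
where the inner sum ranges over the matched pairs `u < σ s u` of the `s`-th matching. -/
theorem rounding_coefficients_sum_sq_bound (n t : ℕ) (hn : 0 < n)
    (σ : ℕ → Fin n → Fin n)
    (hinv : ∀ s u, σ s (σ s u) = u)
    (M : ℕ → Matrix (Fin n) (Fin n) ℝ)
    (hM : ∀ s u v, M s u v =
      if σ s u = u then (if v = u then (1 : ℝ) else 0)
      else (if v = u ∨ v = σ s u then 1 / 2 else 0))
    (a : Fin n → ℝ) (ha0 : ∀ k, 0 ≤ a k) (ha1 : ∑ k, a k = 1)
    (Q : ℕ → Matrix (Fin n) (Fin n) ℝ)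
    (hQt : Q t = 1)
    (hQs : ∀ s, s < t → Q s = M (s + 1) * Q (s + 1)) :
    ∑ s ∈ Finset.Icc 1 t,
        ∑ u ∈ Finset.univ.filter (fun u : Fin n => u < σ s u),
          (∑ k, a k * (Q s u k - Q s (σ s u) k)) ^ 2
      ≤ 2 * (∑ k, (a k) ^ 2) - 2 / n := by
  classical
  set x : ℕ → Fin n → ℝ := fun s u => ∑ k, a k * Q s u k with hxdef
  have hx : ∀ s, s < t → ∀ u, x s u = ∑ j, M (s + 1) u j * x (s + 1) j := by
    intro s hs u
    simp only [hxdef, hQs s hs, Matrix.mul_apply]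
    have hk : ∀ k : Fin n, a k * ∑ j, M (s+1) u j * Q (s+1) j k
        = ∑ j, M (s+1) u j * (a k * Q (s+1) j k) := by
      intro k
      rw [Finset.mul_sum]
      exact Finset.sum_congr rfl (fun j _ => by ring)
    rw [Finset.sum_congr rfl (fun k _ => hk k), Finset.sum_comm]
    exact Finset.sum_congr rfl (fun j _ => by rw [← Finset.mul_sum])
  have hxt : ∀ u, x t u = a u := by
    intro u
    simp only [hxdef, hQt, Matrix.one_apply, mul_ite, mul_one, mul_zero]
    simp
  set F : ℕ → ℝ := fun s => ∑ u, x s u ^ 2 with hF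
  have hinner : ∀ s, ∀ u : Fin n,
      (∑ k, a k * (Q s u k - Q s (σ s u) k)) = x s u - x s (σ s u) := by
    intro s u
    simp only [hxdef, mul_sub, Finset.sum_sub_distrib]
  have hstep : ∀ i, i < t →
      (∑ u ∈ Finset.univ.filter (fun u : Fin n => u < σ (i+1) u),
        (x (i+1) u - x (i+1) (σ (i+1) u)) ^ 2) = 2 * (F (i+1) - F i) := by
    intro i hi
    rw [step_identity (σ (i+1)) (hinv (i+1)) (M (i+1)) (hM (i+1)) (x (i+1))]
    congr 2
    simp only [hF]
    exact Finset.sum_congr rfl (fun u _ => by rw [hx i hi u])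
  have hsum : ∀ d, d ≤ t → ∑ u, x (t - d) u = 1 := by
    intro d
    induction d with
    | zero => intro _; simpa [hxt] using ha1
    | succ d ih =>
      intro hd
      have hlt : t - (d + 1) < t := by omega
      have heq : t - (d + 1) + 1 = t - d := by omega
      rw [Finset.sum_congr rfl (fun u _ => hx (t - (d+1)) hlt u),
        sum_preserved (σ (t - (d+1) + 1)) (hinv _) (M (t - (d+1) + 1)) (hM _) _, heq]
      exact ih (by omega)
  have hsum0 : ∑ u, x 0 u = 1 := by
    have := hsum t le_rfl
    simpa using this
  have hcs : (1 : ℝ) ≤ n * F 0 := by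
    have h := sq_sum_le_card_mul_sum_sq (s := (univ : Finset (Fin n)))
      (f := fun u => x 0 u)
    rw [hsum0] at h
    simpa using h
  have hreindex : ∑ s ∈ Finset.Icc 1 t,
        ∑ u ∈ Finset.univ.filter (fun u : Fin n => u < σ s u),
          (∑ k, a k * (Q s u k - Q s (σ s u) k)) ^ 2
      = ∑ i ∈ Finset.range t, 2 * (F (i+1) - F i) := by
    have hre : ∀ G : ℕ → ℝ, ∑ s ∈ Finset.Icc 1 t, G s = ∑ i ∈ Finset.range t, G (i + 1) := by
      intro G
      refine Finset.sum_nbij' (fun s => s - 1) (fun i => i + 1) ?_ ?_ ?_ ?_ ?_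
      · intro s hs; simp only [Finset.mem_Icc] at hs; simp only [Finset.mem_range]; omega
      · intro i hi; simp only [Finset.mem_range] at hi; simp only [Finset.mem_Icc]; omega
      · intro s hs; simp only [Finset.mem_Icc] at hs; show s - 1 + 1 = s; omega
      · intro i _; show i + 1 - 1 = i; omega
      · intro s hs
        simp only [Finset.mem_Icc] at hs
        have : s - 1 + 1 = s := by omega
        rw [this]
    rw [hre]
    refine Finset.sum_congr rfl (fun i hi => ?_)
    rw [Finset.mem_range] at hi
    rw [Finset.sum_congr rfl (fun u _ => by rw [hinner (i + 1) u])]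
    exact hstep i hi
  rw [hreindex, ← Finset.mul_sum, Finset.sum_range_sub (fun i => F i)]
  have hFt : F t = ∑ k, (a k) ^ 2 := by
    simp only [hF]
    exact Finset.sum_congr rfl (fun u _ => by rw [hxt u])
  rw [hFt]
  have hn' : (0 : ℝ) < n := by exact_mod_cast hn
  have hF0 : 2 / (n : ℝ) ≤ 2 * F 0 := by
    rw [div_le_iff₀ hn']
    nlinarith
  linarith
end

section
/- In the height-sensitive process, the height of any token is non-increasing over time: for any token i and rounds t₁ < t₂, H_i^{(t₁)} ≥ H_i^{(t₂)}. -/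
/-- In the height-sensitive process, the height of any token is non-increasing over
time. The process is described by: token locations `W t i`, heights `H t i`, loads
`X t u` (number of tokens at node `u`), and matchings given by involutions `σ t`.
In a round, a token on an unmatched node keeps its location and height; a token on a
node matched with a different node keeps its height if it is at most
`⌊(X_u + X_v)/2⌋` (shuffling does not change heights), and otherwise (top token of
the heavier node moving to the lighter one) its height decreases by
`⌊(X_u − X_v)/2⌋`. Conclusion: `H_i^{(t₂)} ≤ H_i^{(t₁)}` for `t₁ < t₂`. -/
theorem height_nonincreasing (n : ℕ) (T : Type*) [Fintype T] [DecidableEq T]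
    (σ : ℕ → Fin n → Fin n) (hinv : ∀ t u, σ t (σ t u) = u)
    (W : ℕ → T → Fin n) (H : ℕ → T → ℕ)
    (X : ℕ → Fin n → ℕ)
    (hX : ∀ t u, X t u = (Finset.univ.filter (fun i => W t i = u)).card)
    (hunmatched : ∀ t i, σ (t + 1) (W t i) = W t i →
      W (t + 1) i = W t i ∧ H (t + 1) i = H t i)
    (hmatched : ∀ t i, σ (t + 1) (W t i) ≠ W t i →
      H (t + 1) i =
        if H t i ≤ (X t (W t i) + X t (σ (t + 1) (W t i))) / 2 then H t i
        else H t i - (X t (W t i) - X t (σ (t + 1) (W t i))) / 2) :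
    ∀ (i : T) (t₁ t₂ : ℕ), t₁ < t₂ → H t₂ i ≤ H t₁ i := by
  have step : ∀ t i, H (t + 1) i ≤ H t i := by
    intro t i
    by_cases h : σ (t + 1) (W t i) = W t i
    · exact ((hunmatched t i h).2).le
    · rw [hmatched t i h]
      split
      · exact le_refl _
      · exact Nat.sub_le _ _
  intro i t₁ t₂ h
  induction t₂ with
  | zero => omega
  | succ t ih =>
    rcases Nat.lt_succ_iff_lt_or_eq.mp h with h' | h'
    · exact (step t i).trans (ih h')
    · subst h'; exact step t₁ i
end

section
/- Negative association of token locations: fix rounds t₁ < t₂, a fixed matching sequence, and a fixed location vector at round t₁. Then for any set B of tokens and any set D of nodes, Pr[⋂_{i∈B} {W_i^{(t₂)} ∈ D}] ≤ ∏_{i∈B} M^{[t₁+1,t₂]}_{w_i, D}, where w_i is token i's location at round t₁ and M_{u,D} = ∑_{v∈D} M_{u,v}. -/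
/-!
Drive the process by its coins. After `k` rounds the configuration is a deterministic function
`run` of the coins read so far, and these lie in a finite set because heights never exceed the
number of tokens, so the probability of the event is a normalised count of coin patterns.

`reachProb σ t₂ D t u` is the probability that a single token doing the non-interacting matching
walk from `u` at time `t` is in `D` at time `t₂`. It satisfies
`reachProb t = M (t + 1) *ᵥ reachProb (t + 1)`, whence `reachProb t₁ u = ∑ v ∈ D, Q t₂ u v`.
The average over coin patterns of `∏ i ∈ B, reachProb t (W t i)` does not increase from one round
to the next: at most two tokens read the same coin, a lone token contributes exactly its average,
and two siblings of equal height on one edge `{u, v}` land on opposite endpoints, contributing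
`p * q ≤ ((p + q) / 2) ^ 2` with `p, q` the values at `u, v`. The sibling structure rests on
the invariant `Config.Stacked` (the heights on every node are exactly `1, …, load`), which every
round preserves.
-/

open Finset MeasureTheory ProbabilityTheory Matrix

theorem Finset.sum_powerset_union_of_disjoint {α β : Type*} [DecidableEq α] [AddCommMonoid β]
    {s t : Finset α} (hst : Disjoint s t) (f : Finset α → β) :
    ∑ u ∈ (s ∪ t).powerset, f u = ∑ u ∈ s.powerset, ∑ v ∈ t.powerset, f (u ∪ v) := by
  rw [powerset_union, ← sum_product']
  change ∑ u ∈ (s.powerset ×ˢ t.powerset).image (fun p => p.1 ∪ p.2), f u = _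
  rw [sum_image]
  rintro ⟨u, v⟩ huv ⟨u', v'⟩ huv' h
  simp only [coe_product, Set.mem_prod, mem_coe, mem_powerset] at huv huv'
  have parts : ∀ {u v : Finset α}, u ⊆ s → v ⊆ t → (u ∪ v) ∩ s = u ∧ (u ∪ v) ∩ t = v :=
    fun hu hv => ⟨by rw [union_inter_distrib_right, inter_eq_left.2 hu,
        disjoint_iff_inter_eq_empty.1 (disjoint_of_subset_left hv hst.symm), union_empty],
      by rw [union_inter_distrib_right, inter_eq_left.2 hv,
        disjoint_iff_inter_eq_empty.1 (disjoint_of_subset_left hu hst), empty_union]⟩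
  obtain ⟨hs, ht⟩ := parts huv.1 huv.2
  obtain ⟨hs', ht'⟩ := parts huv'.1 huv'.2
  simp only at h
  exact Prod.ext (hs.symm.trans (by rw [h, hs'])) (ht.symm.trans (by rw [h, ht']))

theorem Finset.prod_add_prod_le_two_mul_prod {ι : Type*} {s : Finset ι} (hs : #s ≤ 2)
    {φ : ι → Bool → ℝ} {m : ι → ℝ} (hadd : ∀ i ∈ s, φ i true + φ i false = 2 * m i)
    (hmul : ∀ i ∈ s, ∀ j ∈ s, i ≠ j → ∀ b, φ i b * φ j b ≤ m i * m j) :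
    ∏ i ∈ s, φ i true + ∏ i ∈ s, φ i false ≤ 2 * ∏ i ∈ s, m i := by
  classical
  interval_cases h : #s
  · norm_num [card_eq_zero.1 h]
  · obtain ⟨i, rfl⟩ := card_eq_one.1 h
    simpa using (hadd i (mem_singleton_self i)).le
  · obtain ⟨i, j, hij, rfl⟩ := card_eq_two.1 h
    simp only [mem_insert, mem_singleton, forall_eq_or_imp, forall_eq] at hmul
    rw [prod_pair hij, prod_pair hij, prod_pair hij]
    linarith [hmul.1.2 hij true, hmul.1.2 hij false]

theorem Finset.sum_powerset_prod_le {α ι : Type*} [DecidableEq α] {K : Finset α} {B : Finset ι}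
    {κ : ι → α} (hκ : ∀ i ∈ B, κ i ∈ K) {x : ι → Bool → ℝ} (hx : ∀ i b, 0 ≤ x i b) (m : ι → ℝ)
    (hfiber : ∀ a ∈ K, ∏ i ∈ B with κ i = a, x i true + ∏ i ∈ B with κ i = a, x i false ≤
      2 * ∏ i ∈ B with κ i = a, m i) :
    ∑ G ∈ K.powerset, ∏ i ∈ B, x i (decide (κ i ∈ G)) ≤ 2 ^ #K * ∏ i ∈ B, m i := by
  set ψ : α → Bool → ℝ := fun a b => ∏ i ∈ B with κ i = a, x i b
  have hsplit : ∀ G ∈ K.powerset,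
      ∏ i ∈ B, x i (decide (κ i ∈ G)) = (∏ a ∈ G, ψ a true) * ∏ a ∈ K \ G, ψ a false := by
    intro G hG
    rw [← prod_fiberwise_of_maps_to hκ, ← prod_filter_mul_prod_filter_not K (· ∈ G),
      filter_mem_eq_inter, inter_eq_right.2 (mem_powerset.1 hG), filter_not,
      filter_mem_eq_inter, inter_eq_right.2 (mem_powerset.1 hG)]
    congr 1 <;> refine prod_congr rfl fun a ha => prod_congr rfl fun i hi => ?_
    · rw [(mem_filter.1 hi).2, decide_eq_true ha]
    · rw [(mem_filter.1 hi).2, decide_eq_false (mem_sdiff.1 ha).2]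
  calc ∑ G ∈ K.powerset, ∏ i ∈ B, x i (decide (κ i ∈ G))
      = ∏ a ∈ K, (ψ a true + ψ a false) := by rw [sum_congr rfl hsplit, prod_add]
    _ ≤ ∏ a ∈ K, 2 * ∏ i ∈ B with κ i = a, m i :=
        prod_le_prod (fun a _ => add_nonneg (prod_nonneg fun i _ => hx i _)
          (prod_nonneg fun i _ => hx i _)) hfiber
    _ = 2 ^ #K * ∏ i ∈ B, m i := by rw [prod_mul_distrib, prod_const, prod_fiberwise_of_maps_to hκ]

section FairCoins

variable {ι Ω : Type*} [MeasurableSpace Ω] {μ : Measure Ω} [IsProbabilityMeasure μ]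
  {ξ : ι → Ω → Bool}

theorem measure_coin_pattern (hmeas : ∀ p, Measurable (ξ p))
    (hfair : ∀ p, μ {ω | ξ p ω = true} = 1 / 2) (hindep : iIndepFun ξ μ)
    (S : Finset ι) (b : ι → Bool) :
    μ {ω | ∀ p ∈ S, ξ p ω = b p} = 2⁻¹ ^ #S := by
  have hcoin : ∀ p c, μ (ξ p ⁻¹' {c}) = 2⁻¹ := by
    intro p c
    have htrue : μ (ξ p ⁻¹' {true}) = 2⁻¹ := (hfair p).trans (one_div 2)
    cases c
    · rw [← Bool.not_true, ← Bool.compl_singleton, Set.preimage_compl,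
        prob_compl_eq_one_sub (hmeas p (measurableSet_singleton true)), htrue,
        ENNReal.one_sub_inv_two]
    · exact htrue
  have hset : {ω | ∀ p ∈ S, ξ p ω = b p} = ⋂ p ∈ S, ξ p ⁻¹' {b p} := by ext; simp
  rw [hset, hindep.meas_biInter fun p _ => ⟨{b p}, trivial, rfl⟩,
    prod_congr rfl fun p _ => hcoin p (b p), prod_const]

theorem measure_le_of_dependsOn [DecidableEq ι] (hmeas : ∀ p, Measurable (ξ p))
    (hfair : ∀ p, μ {ω | ξ p ω = true} = 1 / 2) (hindep : iIndepFun ξ μ)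
    (S : Finset ι) (P : (ι → Bool) → Prop) [DecidablePred P]
    (hP : ∀ c c', (∀ p ∈ S, c p = c' p) → P c → P c') :
    μ {ω | P fun p => ξ p ω} ≤
      ENNReal.ofReal (#{E ∈ S.powerset | P fun p => decide (p ∈ E)} / 2 ^ #S) := by
  have hcover : {ω | P fun p => ξ p ω} ⊆
      ⋃ E ∈ {E ∈ S.powerset | P fun p => decide (p ∈ E)},
        {ω | ∀ p ∈ S, ξ p ω = decide (p ∈ E)} := by
    intro ω hω
    have hagree : ∀ p ∈ S, ξ p ω = decide (p ∈ {q ∈ S | ξ q ω}) := fun p hp => by simp [hp]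
    simp only [Set.mem_iUnion, mem_filter, mem_powerset]
    exact ⟨_, ⟨filter_subset _ _, hP _ _ hagree hω⟩, hagree⟩
  calc μ {ω | P fun p => ξ p ω}
      ≤ ∑ E ∈ {E ∈ S.powerset | P fun p => decide (p ∈ E)},
          μ {ω | ∀ p ∈ S, ξ p ω = decide (p ∈ E)} :=
        (measure_mono hcover).trans (measure_biUnion_finset_le _ _)
    _ = ENNReal.ofReal (#{E ∈ S.powerset | P fun p => decide (p ∈ E)} / 2 ^ #S) := by
        simp_rw [measure_coin_pattern hmeas hfair hindep, sum_const, nsmul_eq_mul]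
        rw [ENNReal.ofReal_div_of_pos (by positivity), ENNReal.ofReal_natCast,
          ENNReal.ofReal_pow zero_le_two, ENNReal.ofReal_ofNat, div_eq_mul_inv, ENNReal.inv_pow]

end FairCoins

namespace HeightSensitive

variable {n : ℕ}

noncomputable def reachProb (σ : ℕ → Fin n → Fin n) (t₂ : ℕ) (D : Finset (Fin n)) (t : ℕ)
    (u : Fin n) : ℝ :=
  if t₂ ≤ t then if u ∈ D then 1 else 0
  else (reachProb σ t₂ D (t + 1) u + reachProb σ t₂ D (t + 1) (σ (t + 1) u)) / 2
termination_by t₂ - t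

section ReachProb

variable {σ : ℕ → Fin n → Fin n} {t₂ : ℕ} {D : Finset (Fin n)}

theorem reachProb_of_le {t : ℕ} (ht : t₂ ≤ t) (u : Fin n) :
    reachProb σ t₂ D t u = if u ∈ D then 1 else 0 := by
  rw [reachProb, if_pos ht]

theorem reachProb_of_lt {t : ℕ} (ht : t < t₂) (u : Fin n) :
    reachProb σ t₂ D t u =
      (reachProb σ t₂ D (t + 1) u + reachProb σ t₂ D (t + 1) (σ (t + 1) u)) / 2 := by
  rw [reachProb, if_neg ht.not_ge]

theorem reachProb_nonneg (t : ℕ) (u : Fin n) : 0 ≤ reachProb σ t₂ D t u := by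
  induction hk : t₂ - t generalizing t u with
  | zero => rw [reachProb_of_le (by omega)]; positivity
  | succ k ih =>
    rw [reachProb_of_lt (by omega)]
    have := ih (t + 1) u (by omega)
    have := ih (t + 1) (σ (t + 1) u) (by omega)
    positivity

theorem matchingMatrix_mulVec {M : Matrix (Fin n) (Fin n) ℝ} {τ : Fin n → Fin n}
    (hM : ∀ a b, M a b =
      if τ a = a then (if b = a then (1 : ℝ) else 0)
      else (if b = a ∨ b = τ a then 1 / 2 else 0))
    (x : Fin n → ℝ) (a : Fin n) : (M *ᵥ x) a = (x a + x (τ a)) / 2 := by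
  simp only [Matrix.mulVec, dotProduct, hM]
  by_cases ha : τ a = a
  · simp [ha]
  · have hsplit : ∀ b, (if b = a ∨ b = τ a then (1 / 2 : ℝ) else 0) * x b =
        (if b = a then x a / 2 else 0) + (if b = τ a then x (τ a) / 2 else 0) := by
      intro b
      by_cases hba : b = a
      · simp [hba, Ne.symm ha]; ring
      · by_cases hbτ : b = τ a <;> simp [hba, hbτ, ha]; ring
    simp only [ha, if_false, hsplit, sum_add_distrib, sum_ite_eq', mem_univ, if_true]
    ring

theorem sum_mem_eq_reachProb {M Q : ℕ → Matrix (Fin n) (Fin n) ℝ} {t₁ : ℕ} (hle : t₁ ≤ t₂)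
    (hM : ∀ s a b, M s a b =
      if σ s a = a then (if b = a then (1 : ℝ) else 0)
      else (if b = a ∨ b = σ s a then 1 / 2 else 0))
    (hQ0 : Q t₁ = 1) (hQs : ∀ s, t₁ ≤ s → s < t₂ → Q (s + 1) = Q s * M (s + 1)) (u : Fin n) :
    ∑ v ∈ D, Q t₂ u v = reachProb σ t₂ D t₁ u := by
  have hconst : ∀ t, t₁ ≤ t → t ≤ t₂ → Q t *ᵥ reachProb σ t₂ D t = reachProb σ t₂ D t₁ := by
    intro t ht
    induction t, ht using Nat.le_induction with
    | base => intro _; rw [hQ0, Matrix.one_mulVec]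
    | succ t ht ih =>
      intro ht₂
      have hstep : M (t + 1) *ᵥ reachProb σ t₂ D (t + 1) = reachProb σ t₂ D t := by
        ext a
        rw [matchingMatrix_mulVec (hM (t + 1)), reachProb_of_lt (t := t) (by omega)]
      rw [hQs t ht (by omega), ← Matrix.mulVec_mulVec, hstep, ih (by omega)]
  rw [← hconst t₂ hle le_rfl]
  simp [Matrix.mulVec, dotProduct, reachProb_of_le le_rfl, sum_ite_mem]

end ReachProb

section EdgeRep

variable {σ : Fin n → Fin n}

def edgeRep (σ : Fin n → Fin n) (u : Fin n) : Fin n := min u (σ u)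

theorem edgeRep_apply (hσ : Function.Involutive σ) (u : Fin n) :
    edgeRep σ (σ u) = edgeRep σ u := by
  rw [edgeRep, edgeRep, hσ, min_comm]

theorem edgeRep_eq_edgeRep_iff (hσ : Function.Involutive σ) {x y : Fin n} :
    edgeRep σ x = edgeRep σ y ↔ x = y ∨ x = σ y := by
  refine ⟨fun h => ?_, by rintro (rfl | rfl) <;> simp [edgeRep_apply hσ]⟩
  unfold edgeRep at h
  rcases min_choice x (σ x) with hx | hx <;> rcases min_choice y (σ y) with hy | hy <;>
    rw [hx, hy] at h
  · exact Or.inl h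
  · exact Or.inr h
  · exact Or.inr (by rw [← h, hσ])
  · exact Or.inl (hσ.injective h)

end EdgeRep

structure Config (n : ℕ) (T : Type*) where
  loc : T → Fin n
  height : T → ℕ

namespace Config

variable {T : Type*} [Fintype T]

def load (s : Config n T) (u : Fin n) : ℕ := #{j | s.loc j = u}

theorem load_le_card (s : Config n T) (u : Fin n) : s.load u ≤ Fintype.card T :=
  card_filter_le _ _

structure Stacked (s : Config n T) : Prop where
  height_ne : ∀ i j, i ≠ j → s.loc i = s.loc j → s.height i ≠ s.height j
  one_le_height : ∀ i, 1 ≤ s.height i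
  height_le_load : ∀ i, s.height i ≤ s.load (s.loc i)

theorem Stacked.exists_height_eq {s : Config n T} (hs : s.Stacked) {u : Fin n} {hh : ℕ}
    (h1 : 1 ≤ hh) (h2 : hh ≤ s.load u) : ∃ j, s.loc j = u ∧ s.height j = hh := by
  have himage : image s.height {j | s.loc j = u} = Icc 1 (s.load u) := by
    refine eq_of_subset_of_card_le (fun x hx => ?_) ?_
    · obtain ⟨j, hj, rfl⟩ := mem_image.1 hx
      have hju : s.loc j = u := (mem_filter.1 hj).2
      exact mem_Icc.2 ⟨hs.one_le_height j, hju ▸ hs.height_le_load j⟩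
    · rw [Nat.card_Icc, Nat.add_sub_cancel, card_image_of_injOn]
      · rfl
      · intro i hi j hj hij
        by_contra hne
        exact hs.height_ne i j hne ((mem_filter.1 hi).2.trans (mem_filter.1 hj).2.symm) hij
  obtain ⟨j, hj, rfl⟩ := mem_image.1 (himage ▸ mem_Icc.2 ⟨h1, h2⟩ : hh ∈ image s.height _)
  exact ⟨j, (mem_filter.1 hj).2, rfl⟩

variable (σ : Fin n → Fin n) (s : Config n T)

def threshold (u : Fin n) : ℕ := (s.load u + s.load (σ u)) / 2

def newHeight (i : T) : ℕ :=
  if s.height i ≤ s.threshold σ (s.loc i) then s.height i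
  else s.height i - (s.load (s.loc i) - s.load (σ (s.loc i))) / 2

/-- A low token crosses its edge iff its coin shows `true`; a high token crossed in the moving
step and is sent back iff its coin shows `true`. On an unmatched node `σ u = u`, so it stays. -/
def newLoc (i : T) (b : Bool) : Fin n :=
  if b = decide (s.height i ≤ s.threshold σ (s.loc i)) then σ (s.loc i) else s.loc i

def coinKey (i : T) : Fin n × ℕ := (edgeRep σ (s.loc i), s.newHeight σ i)

def step (c : Fin n × ℕ → Bool) : Config n T :=
  ⟨fun i => s.newLoc σ i (c (s.coinKey σ i)), s.newHeight σ⟩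

variable {σ s}

@[simp]
theorem step_loc (c : Fin n × ℕ → Bool) (i : T) :
    (s.step σ c).loc i = s.newLoc σ i (c (s.coinKey σ i)) :=
  rfl

@[simp]
theorem step_height (c : Fin n × ℕ → Bool) (i : T) :
    (s.step σ c).height i = s.newHeight σ i :=
  rfl

theorem threshold_apply (hσ : Function.Involutive σ) (u : Fin n) :
    s.threshold σ (σ u) = s.threshold σ u := by
  rw [threshold, threshold, hσ, add_comm]

theorem newHeight_of_le {i : T} (h : s.height i ≤ s.threshold σ (s.loc i)) :
    s.newHeight σ i = s.height i :=
  if_pos h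

theorem newHeight_of_lt {i : T} (h : s.threshold σ (s.loc i) < s.height i) :
    s.newHeight σ i = s.height i - (s.load (s.loc i) - s.load (σ (s.loc i))) / 2 :=
  if_neg h.not_ge

theorem newHeight_le_height (i : T) : s.newHeight σ i ≤ s.height i := by
  unfold newHeight; split_ifs <;> omega

theorem Stacked.one_le_newHeight (hs : s.Stacked) (i : T) : 1 ≤ s.newHeight σ i := by
  have := hs.one_le_height i
  have := hs.height_le_load i
  unfold newHeight threshold; split_ifs <;> omega

theorem newLoc_eq_or (i : T) (b : Bool) :
    s.newLoc σ i b = s.loc i ∨ s.newLoc σ i b = σ (s.loc i) := by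
  unfold newLoc; split_ifs <;> simp

theorem edgeRep_newLoc (hσ : Function.Involutive σ) (i : T) (b : Bool) :
    edgeRep σ (s.newLoc σ i b) = edgeRep σ (s.loc i) := by
  rcases newLoc_eq_or (s := s) i b with h | h <;> rw [h]
  exact edgeRep_apply hσ _

theorem newLoc_true_add_newLoc_false (f : Fin n → ℝ) (i : T) :
    f (s.newLoc σ i true) + f (s.newLoc σ i false) = f (s.loc i) + f (σ (s.loc i)) := by
  unfold newLoc
  cases decide (s.height i ≤ s.threshold σ (s.loc i)) <;> simp [add_comm]

theorem loc_eq_or_of_coinKey_eq (hσ : Function.Involutive σ) {i j : T}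
    (hkey : s.coinKey σ i = s.coinKey σ j) : s.loc j = s.loc i ∨ s.loc j = σ (s.loc i) :=
  (edgeRep_eq_edgeRep_iff hσ).1 (congrArg Prod.fst hkey).symm

theorem Stacked.newLoc_ne (hσ : Function.Involutive σ) (hs : s.Stacked) {i j : T} (hij : i ≠ j)
    (hkey : s.coinKey σ i = s.coinKey σ j) (b : Bool) : s.newLoc σ i b ≠ s.newLoc σ j b := by
  have hH : s.newHeight σ i = s.newHeight σ j := congrArg Prod.snd hkey
  have hi := hs.height_le_load i
  have hj := hs.height_le_load j
  have hθ : s.threshold σ (s.loc i) = (s.load (s.loc i) + s.load (σ (s.loc i))) / 2 := rfl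
  unfold newHeight at hH
  unfold newLoc
  obtain hloc | ⟨hloc, hσu⟩ :
      s.loc j = s.loc i ∨ (s.loc j = σ (s.loc i) ∧ σ (s.loc i) ≠ s.loc i) := by
    rcases loc_eq_or_of_coinKey_eq hσ hkey with h | h
    · exact Or.inl h
    · by_cases hσu : σ (s.loc i) = s.loc i
      · exact Or.inl (h.trans hσu)
      · exact Or.inr ⟨h, hσu⟩
  · have hne := hs.height_ne i j hij hloc.symm
    simp only [hloc] at hH hj ⊢
    by_cases hσu : σ (s.loc i) = s.loc i <;>
      by_cases hLi : s.height i ≤ s.threshold σ (s.loc i) <;>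
      by_cases hLj : s.height j ≤ s.threshold σ (s.loc i) <;>
      cases b <;> simp [hLi, hLj, hσu] at hH hθ ⊢ <;> omega
  · simp only [hloc, hσ (s.loc i), threshold_apply hσ] at hH hj ⊢
    by_cases hLi : s.height i ≤ s.threshold σ (s.loc i) <;>
      by_cases hLj : s.height j ≤ s.threshold σ (s.loc i) <;>
      cases b <;> simp [hLi, hLj] at hH ⊢ <;> omega

theorem Stacked.newLoc_mul_newLoc (hσ : Function.Involutive σ) (hs : s.Stacked) {i j : T}
    (hij : i ≠ j) (hkey : s.coinKey σ i = s.coinKey σ j) (f : Fin n → ℝ) (b : Bool) :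
    f (s.newLoc σ i b) * f (s.newLoc σ j b) = f (s.loc i) * f (σ (s.loc i)) := by
  have hne := hs.newLoc_ne hσ hij hkey b
  rcases newLoc_eq_or (s := s) i b with hi | hi <;> rw [hi] at hne ⊢ <;>
    rcases newLoc_eq_or (s := s) j b with hj | hj <;> rw [hj] at hne ⊢ <;>
    rcases loc_eq_or_of_coinKey_eq hσ hkey with hl | hl <;> rw [hl] at hne ⊢ <;>
    simp_all [hσ (s.loc i), mul_comm]

theorem Stacked.card_le_two (hσ : Function.Involutive σ) (hs : s.Stacked) {A : Finset T}
    (hA : ∀ i ∈ A, ∀ j ∈ A, s.coinKey σ i = s.coinKey σ j) : #A ≤ 2 := by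
  by_contra! h
  obtain ⟨i, j, k, hi, hj, hk, hij, hik, hjk⟩ := two_lt_card_iff.1 h
  have hmem : ∀ l ∈ A, s.newLoc σ l true = s.loc i ∨ s.newLoc σ l true = σ (s.loc i) := by
    intro l hl
    rcases loc_eq_or_of_coinKey_eq hσ (hA i hi l hl) with h | h <;>
      rcases newLoc_eq_or (s := s) l true with h' | h' <;> rw [h', h] <;> simp [hσ (s.loc i)]
  have := hs.newLoc_ne hσ hij (hA i hi j hj) true
  have := hs.newLoc_ne hσ hik (hA i hi k hk) true
  have := hs.newLoc_ne hσ hjk (hA j hj k hk) true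
  rcases hmem i hi with h₁ | h₁ <;> rcases hmem j hj with h₂ | h₂ <;>
    rcases hmem k hk with h₃ | h₃ <;> simp_all

theorem Stacked.prod_newLoc_add_prod_le (hσ : Function.Involutive σ) (hs : s.Stacked)
    {A : Finset T} (hA : ∀ i ∈ A, ∀ j ∈ A, s.coinKey σ i = s.coinKey σ j) (f : Fin n → ℝ) :
    ∏ i ∈ A, f (s.newLoc σ i true) + ∏ i ∈ A, f (s.newLoc σ i false) ≤
      2 * ∏ i ∈ A, (f (s.loc i) + f (σ (s.loc i))) / 2 := by
  refine prod_add_prod_le_two_mul_prod (φ := fun i b => f (s.newLoc σ i b))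
    (m := fun i => (f (s.loc i) + f (σ (s.loc i))) / 2) (hs.card_le_two hσ hA)
    (fun i _ => by simp only [newLoc_true_add_newLoc_false]; ring) fun i hi j hj hij b => ?_
  have hsum : f (s.loc j) + f (σ (s.loc j)) = f (s.loc i) + f (σ (s.loc i)) := by
    rcases loc_eq_or_of_coinKey_eq hσ (hA i hi j hj) with h | h <;> rw [h]
    rw [hσ, add_comm]
  simp only [hs.newLoc_mul_newLoc hσ hij (hA i hi j hj), hsum]
  nlinarith [sq_nonneg (f (s.loc i) - f (σ (s.loc i)))]

theorem Stacked.sum_powerset_prod_step_le {α : Type*} [DecidableEq α] (hσ : Function.Involutive σ)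
    (hs : s.Stacked) {f : Fin n → ℝ} (hf : ∀ u, 0 ≤ f u) (B : Finset T)
    {ℓ : Fin n × ℕ → α} (hℓ : Function.Injective ℓ) {L : Finset α}
    (hL : ∀ i ∈ B, ℓ (s.coinKey σ i) ∈ L) :
    ∑ G ∈ L.powerset, ∏ i ∈ B, f ((s.step σ fun q => decide (ℓ q ∈ G)).loc i) ≤
      2 ^ #L * ∏ i ∈ B, (f (s.loc i) + f (σ (s.loc i))) / 2 :=
  sum_powerset_prod_le hL (x := fun i b => f (s.newLoc σ i b)) (fun _ _ => hf _) _
    fun _ _ => hs.prod_newLoc_add_prod_le hσ (fun _ hi _ hj => hℓ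
      ((mem_filter.1 hi).2.trans (mem_filter.1 hj).2.symm)) f

theorem Stacked.exists_pair_coinKey_of_load_le (hσ : Function.Involutive σ) (hs : s.Stacked)
    {p : Fin n} (hp : σ p ≠ p) (hle : s.load (σ p) ≤ s.load p) {hh : ℕ} (h1 : 1 ≤ hh)
    (h2 : hh ≤ s.threshold σ p) :
    ∃ j₁ j₂, j₁ ≠ j₂ ∧ s.coinKey σ j₁ = (edgeRep σ p, hh) ∧ s.coinKey σ j₂ = (edgeRep σ p, hh) := by
  have hθ : s.threshold σ p = (s.load p + s.load (σ p)) / 2 := rfl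
  obtain ⟨j₁, hj₁, hH₁⟩ := hs.exists_height_eq h1 (by omega : hh ≤ s.load p)
  have hkey₁ : s.coinKey σ j₁ = (edgeRep σ p, hh) := by
    rw [coinKey, newHeight_of_le (by rw [hj₁, hH₁]; exact h2), hj₁, hH₁]
  -- Either both endpoints carry height `hh`, or the heavy one also carries
  -- `hh + (load p - load (σ p)) / 2`, which the moving step lowers to `hh`.
  by_cases hlight : hh ≤ s.load (σ p)
  · obtain ⟨j₂, hj₂, hH₂⟩ := hs.exists_height_eq h1 hlight
    refine ⟨j₁, j₂, fun h => hp (by rw [← hj₂, ← h, hj₁]), hkey₁, ?_⟩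
    rw [coinKey, newHeight_of_le (by rw [hj₂, hH₂, threshold_apply hσ]; exact h2), hj₂, hH₂,
      edgeRep_apply hσ]
  · obtain ⟨j₂, hj₂, hH₂⟩ :=
      hs.exists_height_eq (u := p) (hh := hh + (s.load p - s.load (σ p)) / 2) (by omega) (by omega)
    refine ⟨j₁, j₂, fun h => by subst h; omega, hkey₁, ?_⟩
    rw [coinKey, newHeight_of_lt (by rw [hj₂, hH₂]; omega), hj₂, hH₂, Nat.add_sub_cancel]

theorem Stacked.exists_pair_coinKey (hσ : Function.Involutive σ) (hs : s.Stacked)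
    {p : Fin n} (hp : σ p ≠ p) {hh : ℕ} (h1 : 1 ≤ hh) (h2 : hh ≤ s.threshold σ p) :
    ∃ j₁ j₂, j₁ ≠ j₂ ∧ s.coinKey σ j₁ = (edgeRep σ p, hh) ∧ s.coinKey σ j₂ = (edgeRep σ p, hh) := by
  rcases le_total (s.load (σ p)) (s.load p) with hle | hle
  · exact hs.exists_pair_coinKey_of_load_le hσ hp hle h1 h2
  · rw [← edgeRep_apply hσ]
    refine hs.exists_pair_coinKey_of_load_le hσ (by rwa [hσ, ne_comm]) (by rwa [hσ]) h1 ?_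
    rwa [threshold_apply hσ]

theorem Stacked.exists_step_loc_eq (hσ : Function.Involutive σ) (hs : s.Stacked)
    (c : Fin n × ℕ → Bool) {i : T} {hh : ℕ} (h1 : 1 ≤ hh) (h2 : hh < s.newHeight σ i) :
    ∃ j, (s.step σ c).loc j = (s.step σ c).loc i ∧ s.newHeight σ j = hh := by
  have hθ : s.threshold σ (s.loc i) = (s.load (s.loc i) + s.load (σ (s.loc i))) / 2 := rfl
  have hHi := hs.height_le_load i
  by_cases hu : σ (s.loc i) = s.loc i
  · have hstay : ∀ j, s.loc j = s.loc i →
        (s.step σ c).loc j = s.loc i ∧ s.newHeight σ j = s.height j := by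
      intro j hj
      have hHj := hs.height_le_load j
      rw [hj] at hHj
      refine ⟨?_, newHeight_of_le (by rw [hj, hθ, hu]; omega)⟩
      rcases newLoc_eq_or (σ := σ) (s := s) j (c (s.coinKey σ j)) with h | h <;>
        simp only [step_loc, h, hj, hu]
    have hHi' : s.newHeight σ i = s.height i := (hstay i rfl).2
    obtain ⟨j, hj, hH⟩ := hs.exists_height_eq h1 (by omega : hh ≤ s.load (s.loc i))
    exact ⟨j, by rw [(hstay j hj).1, (hstay i rfl).1], (hstay j hj).2.trans hH⟩
  · have hk : s.newHeight σ i ≤ s.threshold σ (s.loc i) + 1 := by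
      unfold newHeight; split_ifs <;> omega
    -- Two tokens read the coin `(edgeRep σ (s.loc i), hh)`; they end on opposite endpoints of
    -- the edge of `i`, so one of them ends where `i` does.
    obtain ⟨j₁, j₂, hne, hk₁, hk₂⟩ := hs.exists_pair_coinKey hσ hu h1 (by omega)
    have hkey := hk₁.trans hk₂.symm
    have hc : (s.step σ c).loc j₁ ≠ (s.step σ c).loc j₂ := by
      rw [step_loc, step_loc, ← hkey]
      exact hs.newLoc_ne hσ hne hkey _
    have hedge : ∀ j, edgeRep σ (s.loc j) = edgeRep σ (s.loc i) →
        (s.step σ c).loc j = s.loc i ∨ (s.step σ c).loc j = σ (s.loc i) := fun j hj =>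
      (edgeRep_eq_edgeRep_iff hσ).1 ((edgeRep_newLoc hσ j _).trans hj)
    rcases hedge i rfl with h | h <;>
      rcases hedge j₁ (congrArg Prod.fst hk₁) with h₁ | h₁ <;>
      rcases hedge j₂ (congrArg Prod.fst hk₂) with h₂ | h₂
    all_goals first
      | exact ⟨j₁, h₁.trans h.symm, congrArg Prod.snd hk₁⟩
      | exact ⟨j₂, h₂.trans h.symm, congrArg Prod.snd hk₂⟩
      | exact absurd (h₁.trans h₂.symm) hc

theorem Stacked.step (hσ : Function.Involutive σ) (hs : s.Stacked) (c : Fin n × ℕ → Bool) :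
    (s.step σ c).Stacked where
  height_ne i j hij hloc hH := by
    have hkey : s.coinKey σ i = s.coinKey σ j := by
      rw [coinKey, coinKey, ← edgeRep_newLoc hσ i (c (s.coinKey σ i)),
        ← edgeRep_newLoc hσ j (c (s.coinKey σ j))]
      exact Prod.ext (congrArg (edgeRep σ) hloc) hH
    exact hs.newLoc_ne hσ hij hkey _ (hloc.trans (by rw [step_loc, hkey]))
  one_le_height := hs.one_le_newHeight
  height_le_load i := by
    have hsub : Icc 1 (s.newHeight σ i) ⊆
        image (s.step σ c).height {j | (s.step σ c).loc j = (s.step σ c).loc i} := by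
      intro hh hmem
      rw [mem_Icc] at hmem
      rcases hmem.2.lt_or_eq with hlt | rfl
      · obtain ⟨j, hj, hH⟩ := hs.exists_step_loc_eq hσ c hmem.1 hlt
        exact mem_image.2 ⟨j, mem_filter.2 ⟨mem_univ _, hj⟩, hH⟩
      · exact mem_image.2 ⟨i, mem_filter.2 ⟨mem_univ _, rfl⟩, rfl⟩
    calc (s.step σ c).height i = #(Icc 1 (s.newHeight σ i)) := by simp
      _ ≤ _ := (card_le_card hsub).trans card_image_le

def keySet (n : ℕ) (T : Type*) [Fintype T] : Finset (Fin n × ℕ) :=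
  univ ×ˢ Icc 1 (Fintype.card T)

theorem Stacked.coinKey_mem_keySet (hs : s.Stacked) (i : T) : s.coinKey σ i ∈ keySet n T :=
  mem_product.2 ⟨mem_univ _, mem_Icc.2 ⟨hs.one_le_newHeight i,
    (newHeight_le_height i).trans ((hs.height_le_load i).trans (load_le_card _ _))⟩⟩

theorem Stacked.step_congr (hs : s.Stacked) {c c' : Fin n × ℕ → Bool}
    (h : ∀ q ∈ keySet n T, c q = c' q) : s.step σ c = s.step σ c' := by
  unfold Config.step
  congr 1
  funext i
  rw [h _ (hs.coinKey_mem_keySet i)]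

theorem step_eq_of_moves {s' : Config n T} {c : Fin n × ℕ → Bool}
    (hunmatched : ∀ i, σ (s.loc i) = s.loc i → s'.loc i = s.loc i ∧ s'.height i = s.height i)
    (hlow : ∀ i, σ (s.loc i) ≠ s.loc i → s.height i ≤ s.threshold σ (s.loc i) →
      s'.height i = s.height i ∧
        s'.loc i = if c (edgeRep σ (s.loc i), s.height i) then σ (s.loc i) else s.loc i)
    (hhigh : ∀ i, σ (s.loc i) ≠ s.loc i → ¬ s.height i ≤ s.threshold σ (s.loc i) →
      s'.height i = s.height i - (s.load (s.loc i) - s.load (σ (s.loc i))) / 2 ∧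
        s'.loc i = if c (edgeRep σ (s.loc i), s'.height i) then s.loc i else σ (s.loc i)) :
    s.step σ c = s' := by
  have hheight : ∀ i, s.newHeight σ i = s'.height i := fun i => by
    by_cases hu : σ (s.loc i) = s.loc i
    · rw [(hunmatched i hu).2, newHeight]
      split_ifs <;> simp [hu]
    by_cases hl : s.height i ≤ s.threshold σ (s.loc i)
    · rw [newHeight_of_le hl, (hlow i hu hl).1]
    · rw [newHeight_of_lt (not_le.1 hl), (hhigh i hu hl).1]
  obtain ⟨loc', height'⟩ := s'
  simp only [Config.step, Config.mk.injEq]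
  refine ⟨funext fun i => ?_, funext hheight⟩
  simp only at hunmatched hlow hhigh hheight ⊢
  rw [coinKey, hheight, newLoc]
  by_cases hu : σ (s.loc i) = s.loc i
  · rw [(hunmatched i hu).1, hu]; split_ifs <;> rfl
  by_cases hl : s.height i ≤ s.threshold σ (s.loc i)
  · rw [(hlow i hu hl).2, (hlow i hu hl).1]
    cases c (edgeRep σ (s.loc i), s.height i) <;> simp [hl]
  · rw [(hhigh i hu hl).2]
    cases c (edgeRep σ (s.loc i), height' i) <;> simp [hl]

end Config

section Run

open Config

variable {T : Type*} [Fintype T] {σ : ℕ → Fin n → Fin n} {t₀ : ℕ} {s₀ : Config n T}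

def run (σ : ℕ → Fin n → Fin n) (t₀ : ℕ) (s₀ : Config n T) (c : ℕ × Fin n × ℕ → Bool) :
    ℕ → Config n T
  | 0 => s₀
  | k + 1 => (run σ t₀ s₀ c k).step (σ (t₀ + k + 1)) fun q => c (t₀ + k + 1, q)

def coinSet (n : ℕ) (T : Type*) [Fintype T] (t₀ k : ℕ) : Finset (ℕ × Fin n × ℕ) :=
  Ioc t₀ (t₀ + k) ×ˢ keySet n T

theorem coinSet_succ (t₀ k : ℕ) :
    coinSet n T t₀ (k + 1) = coinSet n T t₀ k ∪ {t₀ + k + 1} ×ˢ keySet n T := by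
  ext ⟨r, q⟩
  simp only [coinSet, mem_union, mem_product, mem_Ioc, mem_singleton, ← or_and_right]
  exact and_congr_left fun _ => by omega

theorem disjoint_coinSet (t₀ k : ℕ) :
    Disjoint (coinSet n T t₀ k) ({t₀ + k + 1} ×ˢ keySet n T) := by
  rw [disjoint_left]
  rintro ⟨r, q⟩ h h'
  simp only [coinSet, mem_product, mem_Ioc, mem_singleton] at h h'
  omega

theorem stacked_run (hσ : ∀ t, Function.Involutive (σ t)) (hs₀ : s₀.Stacked)
    (c : ℕ × Fin n × ℕ → Bool) (k : ℕ) : (run σ t₀ s₀ c k).Stacked := by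
  induction k with
  | zero => exact hs₀
  | succ k ih => exact ih.step (hσ _) _

theorem run_congr (hσ : ∀ t, Function.Involutive (σ t)) (hs₀ : s₀.Stacked)
    {c c' : ℕ × Fin n × ℕ → Bool} {k : ℕ} (h : ∀ p ∈ coinSet n T t₀ k, c p = c' p) :
    run σ t₀ s₀ c k = run σ t₀ s₀ c' k := by
  induction k with
  | zero => rfl
  | succ k ih =>
    rw [coinSet_succ] at h
    rw [run, run, ih fun p hp => h p (mem_union_left _ hp)]
    exact (stacked_run hσ hs₀ c' k).step_congr fun q hq =>
      h _ (mem_union_right _ (mem_product.2 ⟨mem_singleton_self _, hq⟩))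

theorem run_succ_decide_union (hσ : ∀ t, Function.Involutive (σ t)) (hs₀ : s₀.Stacked)
    {k : ℕ} {E G : Finset (ℕ × Fin n × ℕ)} (hE : E ⊆ coinSet n T t₀ k)
    (hG : G ⊆ {t₀ + k + 1} ×ˢ keySet n T) :
    run σ t₀ s₀ (fun p => decide (p ∈ E ∪ G)) (k + 1) =
      (run σ t₀ s₀ (fun p => decide (p ∈ E)) k).step (σ (t₀ + k + 1))
        fun q => decide ((t₀ + k + 1, q) ∈ G) := by
  have hE' : ∀ q, (t₀ + k + 1, q) ∉ E := fun q hq => by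
    have := (mem_Ioc.1 (mem_product.1 (hE hq)).1).2
    omega
  show (run σ t₀ s₀ _ k).step _ _ = _
  rw [run_congr hσ hs₀ fun p hp => ?_]
  · congr 1
    funext q
    simp [hE']
  · have : p ∉ G := fun hpG => disjoint_left.1 (disjoint_coinSet t₀ k) hp (hG hpG)
    simp [this]

theorem sum_powerset_prod_run_le (hσ : ∀ t, Function.Involutive (σ t)) (hs₀ : s₀.Stacked)
    {g : ℕ → Fin n → ℝ} (hg0 : ∀ t u, 0 ≤ g t u) (B : Finset T) (k : ℕ)
    (hg : ∀ j < k, ∀ u,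
      g (t₀ + j) u = (g (t₀ + j + 1) u + g (t₀ + j + 1) (σ (t₀ + j + 1) u)) / 2) :
    ∑ E ∈ (coinSet n T t₀ k).powerset,
        ∏ i ∈ B, g (t₀ + k) ((run σ t₀ s₀ (fun p => decide (p ∈ E)) k).loc i) ≤
      2 ^ #(coinSet n T t₀ k) * ∏ i ∈ B, g t₀ (s₀.loc i) := by
  induction k with
  | zero => simp [coinSet, run]
  | succ k ih =>
    set L := {t₀ + k + 1} ×ˢ keySet n T
    set r : Finset (ℕ × Fin n × ℕ) → Config n T :=
      fun E => run σ t₀ s₀ (fun p => decide (p ∈ E)) k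
    have hround : ∀ E ∈ (coinSet n T t₀ k).powerset, ∑ G ∈ L.powerset, ∏ i ∈ B,
        g (t₀ + (k + 1)) ((run σ t₀ s₀ (fun p => decide (p ∈ E ∪ G)) (k + 1)).loc i) ≤
          2 ^ #L * ∏ i ∈ B, g (t₀ + k) ((r E).loc i) := by
      intro E hE
      have hr : (r E).Stacked := stacked_run hσ hs₀ _ k
      calc _ = ∑ G ∈ L.powerset, ∏ i ∈ B, g (t₀ + k + 1)
              (((r E).step (σ (t₀ + k + 1)) fun q => decide ((t₀ + k + 1, q) ∈ G)).loc i) :=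
            sum_congr rfl fun G hG => by
              rw [run_succ_decide_union hσ hs₀ (mem_powerset.1 hE) (mem_powerset.1 hG)]; rfl
        _ ≤ 2 ^ #L * ∏ i ∈ B, (g (t₀ + k + 1) ((r E).loc i) +
              g (t₀ + k + 1) (σ (t₀ + k + 1) ((r E).loc i))) / 2 :=
            hr.sum_powerset_prod_step_le (hσ _) (hg0 _) B (Prod.mk_right_injective _)
              fun i _ => mem_product.2 ⟨mem_singleton_self _, hr.coinKey_mem_keySet i⟩
        _ = _ := by simp only [← hg k (by omega)]
    rw [coinSet_succ, sum_powerset_union_of_disjoint (disjoint_coinSet t₀ k),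
      card_union_of_disjoint (disjoint_coinSet t₀ k), pow_add]
    calc _ ≤ ∑ E ∈ (coinSet n T t₀ k).powerset, 2 ^ #L * ∏ i ∈ B, g (t₀ + k) ((r E).loc i) :=
          sum_le_sum hround
      _ ≤ 2 ^ #L * (2 ^ #(coinSet n T t₀ k) * ∏ i ∈ B, g t₀ (s₀.loc i)) := by
          rw [← mul_sum]
          exact mul_le_mul_of_nonneg_left (ih fun j hj => hg j (by omega)) (by positivity)
      _ = _ := by ring

theorem card_filter_run_le (hσ : ∀ t, Function.Involutive (σ t)) (hs₀ : s₀.Stacked)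
    (B : Finset T) (D : Finset (Fin n)) (k : ℕ) :
    (#{E ∈ (coinSet n T t₀ k).powerset |
        ∀ i ∈ B, (run σ t₀ s₀ (fun p => decide (p ∈ E)) k).loc i ∈ D} : ℝ) ≤
      2 ^ #(coinSet n T t₀ k) * ∏ i ∈ B, reachProb σ (t₀ + k) D t₀ (s₀.loc i) := by
  have h := sum_powerset_prod_run_le hσ hs₀ (reachProb_nonneg (σ := σ) (t₂ := t₀ + k) (D := D))
    B k fun j hj u => reachProb_of_lt (t := t₀ + j) (by omega) u
  simp only [reachProb_of_le le_rfl, prod_boole] at h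
  rw [natCast_card_filter]
  exact (sum_congr rfl fun E _ => by congr).trans_le h

theorem measure_run_le {Ω : Type*} [MeasurableSpace Ω] {μ : Measure Ω} [IsProbabilityMeasure μ]
    {ξ : ℕ × Fin n × ℕ → Ω → Bool} (hmeas : ∀ p, Measurable (ξ p))
    (hfair : ∀ p, μ {ω | ξ p ω = true} = 1 / 2) (hindep : iIndepFun ξ μ)
    (hσ : ∀ t, Function.Involutive (σ t)) (hs₀ : s₀.Stacked)
    (B : Finset T) (D : Finset (Fin n)) (k : ℕ) :
    μ {ω | ∀ i ∈ B, (run σ t₀ s₀ (fun p => ξ p ω) k).loc i ∈ D} ≤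
      ENNReal.ofReal (∏ i ∈ B, reachProb σ (t₀ + k) D t₀ (s₀.loc i)) := by
  refine (measure_le_of_dependsOn hmeas hfair hindep (coinSet n T t₀ k)
    (fun c => ∀ i ∈ B, (run σ t₀ s₀ c k).loc i ∈ D)
    fun c c' h hc => by rwa [← run_congr hσ hs₀ h]).trans (ENNReal.ofReal_le_ofReal ?_)
  rw [div_le_iff₀ (by positivity), mul_comm]
  exact card_filter_run_le hσ hs₀ B D k

end Run


open Config in
theorem run_eq_process {T : Type*} [Fintype T] {Ω : Type*}
    {flip : ℕ → Fin n → ℕ → Ω → Bool} {σ : ℕ → Fin n → Fin n}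
    {W : ℕ → T → Ω → Fin n} {H : ℕ → T → Ω → ℕ} {X : ℕ → Fin n → Ω → ℕ}
    (hX : ∀ t u ω, X t u ω = (Finset.univ.filter (fun j => W t j ω = u)).card)
    {t₁ : ℕ} {w : T → Fin n} {h : T → ℕ}
    (hW1 : ∀ i ω, W t₁ i ω = w i) (hH1 : ∀ i ω, H t₁ i ω = h i)
    (hstep_unmatched : ∀ t i ω, σ (t + 1) (W t i ω) = W t i ω →
      W (t + 1) i ω = W t i ω ∧ H (t + 1) i ω = H t i ω)
    (hstep_low : ∀ t i ω, σ (t + 1) (W t i ω) ≠ W t i ω →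
      H t i ω ≤ (X t (W t i ω) ω + X t (σ (t + 1) (W t i ω)) ω) / 2 →
      H (t + 1) i ω = H t i ω ∧
      W (t + 1) i ω =
        (if flip (t + 1) (min (W t i ω) (σ (t + 1) (W t i ω))) (H t i ω) ω
         then σ (t + 1) (W t i ω) else W t i ω))
    (hstep_high : ∀ t i ω, σ (t + 1) (W t i ω) ≠ W t i ω →
      ¬ (H t i ω ≤ (X t (W t i ω) ω + X t (σ (t + 1) (W t i ω)) ω) / 2) →
      H (t + 1) i ω = H t i ω - (X t (W t i ω) ω - X t (σ (t + 1) (W t i ω)) ω) / 2 ∧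
      W (t + 1) i ω =
        (if flip (t + 1) (min (W t i ω) (σ (t + 1) (W t i ω))) (H (t + 1) i ω) ω
         then W t i ω else σ (t + 1) (W t i ω)))
    (k : ℕ) (ω : Ω) :
    run σ t₁ ⟨w, h⟩ (fun p => flip p.1 p.2.1 p.2.2 ω) k =
      ⟨fun i => W (t₁ + k) i ω, fun i => H (t₁ + k) i ω⟩ := by
  induction k with
  | zero => simp [run, hW1, hH1]
  | succ k ih =>
    simp only [hX] at hstep_low hstep_high
    rw [run, ih]
    exact step_eq_of_moves (fun i => hstep_unmatched _ i ω) (fun i => hstep_low _ i ω)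
      (fun i => hstep_high _ i ω)

end HeightSensitive

open HeightSensitive

theorem height_sensitive_negative_association_general
    (n : ℕ)
    {Ω : Type*} [MeasurableSpace Ω] (μ : Measure Ω) [IsProbabilityMeasure μ]
    (T : Type*) [Fintype T]
    (flip : ℕ → Fin n → ℕ → Ω → Bool)
    (hflipmeas : ∀ t r hh, Measurable (flip t r hh))
    (hfair : ∀ t r hh, μ {ω | flip t r hh ω = true} = 1 / 2)
    (hindep : iIndepFun
      (fun (p : ℕ × Fin n × ℕ) ω => flip p.1 p.2.1 p.2.2 ω) μ)
    (σ : ℕ → Fin n → Fin n) (hinv : ∀ t u, σ t (σ t u) = u)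
    (W : ℕ → T → Ω → Fin n) (H : ℕ → T → Ω → ℕ)
    (X : ℕ → Fin n → Ω → ℕ)
    (hX : ∀ t u ω, X t u ω = (Finset.univ.filter (fun j => W t j ω = u)).card)
    (t₁ t₂ : ℕ) (hlt : t₁ < t₂)
    (w : T → Fin n) (h : T → ℕ)
    (hW1 : ∀ i ω, W t₁ i ω = w i) (hH1 : ∀ i ω, H t₁ i ω = h i)
    (hinj : ∀ i j, i ≠ j → w i = w j → h i ≠ h j)
    (hrange : ∀ i, 1 ≤ h i ∧ h i ≤ (Finset.univ.filter (fun j => w j = w i)).card)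
    (hstep_unmatched : ∀ t i ω, σ (t + 1) (W t i ω) = W t i ω →
      W (t + 1) i ω = W t i ω ∧ H (t + 1) i ω = H t i ω)
    (hstep_low : ∀ t i ω, σ (t + 1) (W t i ω) ≠ W t i ω →
      H t i ω ≤ (X t (W t i ω) ω + X t (σ (t + 1) (W t i ω)) ω) / 2 →
      H (t + 1) i ω = H t i ω ∧
      W (t + 1) i ω =
        (if flip (t + 1) (min (W t i ω) (σ (t + 1) (W t i ω))) (H t i ω) ω
         then σ (t + 1) (W t i ω) else W t i ω))
    (hstep_high : ∀ t i ω, σ (t + 1) (W t i ω) ≠ W t i ω →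
      ¬ (H t i ω ≤ (X t (W t i ω) ω + X t (σ (t + 1) (W t i ω)) ω) / 2) →
      H (t + 1) i ω = H t i ω - (X t (W t i ω) ω - X t (σ (t + 1) (W t i ω)) ω) / 2 ∧
      W (t + 1) i ω =
        (if flip (t + 1) (min (W t i ω) (σ (t + 1) (W t i ω))) (H (t + 1) i ω) ω
         then W t i ω else σ (t + 1) (W t i ω)))
    (M : ℕ → Matrix (Fin n) (Fin n) ℝ)
    (hM : ∀ s a b, M s a b =
      if σ s a = a then (if b = a then (1 : ℝ) else 0)
      else (if b = a ∨ b = σ s a then 1 / 2 else 0))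
    (Q : ℕ → Matrix (Fin n) (Fin n) ℝ)
    (hQ0 : Q t₁ = 1)
    (hQs : ∀ s, t₁ ≤ s → s < t₂ → Q (s + 1) = Q s * M (s + 1))
    (B : Finset T) (D : Finset (Fin n)) :
    μ {ω | ∀ i ∈ B, W t₂ i ω ∈ D}
      ≤ ENNReal.ofReal (∏ i ∈ B, ∑ v ∈ D, Q t₂ (w i) v) := by
  obtain ⟨K, rfl⟩ := Nat.exists_eq_add_of_le hlt.le
  have hevent : {ω | ∀ i ∈ B, W (t₁ + K) i ω ∈ D} =
      {ω | ∀ i ∈ B, (run σ t₁ ⟨w, h⟩ (fun p => flip p.1 p.2.1 p.2.2 ω) K).loc i ∈ D} := by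
    simp [run_eq_process hX hW1 hH1 hstep_unmatched hstep_low hstep_high]
  rw [hevent]
  simp only [sum_mem_eq_reachProb (le_add_right le_rfl) hM hQ0 hQs]
  exact measure_run_le (fun _ => hflipmeas _ _ _) (fun _ => hfair _ _ _) hindep hinv
    ⟨hinj, fun i => (hrange i).1, fun i => (hrange i).2⟩ B D K

/-- Negative association of token locations in the height-sensitive process. The
randomness is given by independent fair coins `flip t r h` (round `t`, edge
representative `r`, height `h`). The process: matchings are involutions `σ t`; the
configuration at round `t₁` is deterministic with locations `w i` and heights `h i`
(distinct heights per node, within range). In round `t+1`, a token on an unmatched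
node keeps its location and height; on a matched edge `{u,v}`, a token whose height
is at most `⌊(X_u+X_v)/2⌋` keeps its height and is swapped to the other endpoint
according to the coin at its height (moving step is the identity for it), while a
token with larger height (on the heavier node) first moves to the other endpoint,
decreasing its height by `⌊(X_u−X_v)/2⌋`, and is then swapped back according to the
coin at its new height. Conclusion: for any set of tokens `B` and set of nodes `D`,
`Pr[⋂_{i∈B} {W_i^{(t₂)} ∈ D}] ≤ ∏_{i∈B} (M^{(t₁+1)}···M^{(t₂)})_{w_i, D}`, where the
product matrix is `Q t₂` and `M_{u,D} = ∑_{v∈D} M_{u,v}`. -/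
theorem height_sensitive_negative_association
    (n : ℕ) (hn : 0 < n)
    {Ω : Type*} [MeasurableSpace Ω] (μ : Measure Ω) [IsProbabilityMeasure μ]
    (T : Type*) [Fintype T] [DecidableEq T]
    (flip : ℕ → Fin n → ℕ → Ω → Bool)
    (hflipmeas : ∀ t r hh, Measurable (flip t r hh))
    (hfair : ∀ t r hh, μ {ω | flip t r hh ω = true} = 1 / 2)
    (hindep : iIndepFun
      (fun (p : ℕ × Fin n × ℕ) ω => flip p.1 p.2.1 p.2.2 ω) μ)
    (σ : ℕ → Fin n → Fin n) (hinv : ∀ t u, σ t (σ t u) = u)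
    (W : ℕ → T → Ω → Fin n) (H : ℕ → T → Ω → ℕ)
    (X : ℕ → Fin n → Ω → ℕ)
    (hX : ∀ t u ω, X t u ω = (Finset.univ.filter (fun j => W t j ω = u)).card)
    (t₁ t₂ : ℕ) (hlt : t₁ < t₂)
    (w : T → Fin n) (h : T → ℕ)
    (hW1 : ∀ i ω, W t₁ i ω = w i) (hH1 : ∀ i ω, H t₁ i ω = h i)
    (hinj : ∀ i j, i ≠ j → w i = w j → h i ≠ h j)
    (hrange : ∀ i, 1 ≤ h i ∧ h i ≤ (Finset.univ.filter (fun j => w j = w i)).card)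
    (hstep_unmatched : ∀ t i ω, σ (t + 1) (W t i ω) = W t i ω →
      W (t + 1) i ω = W t i ω ∧ H (t + 1) i ω = H t i ω)
    (hstep_low : ∀ t i ω, σ (t + 1) (W t i ω) ≠ W t i ω →
      H t i ω ≤ (X t (W t i ω) ω + X t (σ (t + 1) (W t i ω)) ω) / 2 →
      H (t + 1) i ω = H t i ω ∧
      W (t + 1) i ω =
        (if flip (t + 1) (min (W t i ω) (σ (t + 1) (W t i ω))) (H t i ω) ω
         then σ (t + 1) (W t i ω) else W t i ω))
    (hstep_high : ∀ t i ω, σ (t + 1) (W t i ω) ≠ W t i ω →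
      ¬ (H t i ω ≤ (X t (W t i ω) ω + X t (σ (t + 1) (W t i ω)) ω) / 2) →
      H (t + 1) i ω = H t i ω - (X t (W t i ω) ω - X t (σ (t + 1) (W t i ω)) ω) / 2 ∧
      W (t + 1) i ω =
        (if flip (t + 1) (min (W t i ω) (σ (t + 1) (W t i ω))) (H (t + 1) i ω) ω
         then W t i ω else σ (t + 1) (W t i ω)))
    (M : ℕ → Matrix (Fin n) (Fin n) ℝ)
    (hM : ∀ s a b, M s a b =
      if σ s a = a then (if b = a then (1 : ℝ) else 0)
      else (if b = a ∨ b = σ s a then 1 / 2 else 0))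
    (Q : ℕ → Matrix (Fin n) (Fin n) ℝ)
    (hQ0 : Q t₁ = 1)
    (hQs : ∀ s, t₁ ≤ s → s < t₂ → Q (s + 1) = Q s * M (s + 1))
    (B : Finset T) (D : Finset (Fin n)) :
    μ {ω | ∀ i ∈ B, W t₂ i ω ∈ D}
      ≤ ENNReal.ofReal (∏ i ∈ B, ∑ v ∈ D, Q t₂ (w i) v) :=
  height_sensitive_negative_association_general n μ T flip hflipmeas hfair hindep σ hinv W H X hX t₁
    t₂ hlt w h hW1 hH1 hinj hrange hstep_unmatched hstep_low hstep_high M hM Q hQ0 hQs B D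
end
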